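/- Let δ ∈ (0,1), α₀ > 0, R ≥ 0 and K ≥ 0 an integer. Suppose (y_k) is a sequence of nonnegative reals satisfying y_{k+1} ≤ δ y_k + R·α_k for all k ≥ K, where α_k = α₀/(k+1). Then for all k ≥ K, y_{k+1} ≤ δ^{k+1-K} y_K + (R α₀ /(1-δ)) δ^{(k+1)/2} + (R/(1-δ)) α_{⌊k/2⌋}. -/

import Mathlib

/-!
Unrolling the recursion gives `y (k+1) ≤ δ^(k+1-K) y K + ∑_{u=K}^{k} δ^(k-u) R α_u`. Split the
sum at `u = ⌊k/2⌋`: on the early terms bound `α_u ≤ α₀`, and what remains is a geometric tail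
starting at `δ^(k+1-⌊k/2⌋) ≤ δ^((k+1)/2)`; on the late terms bound `α_u ≤ α_{⌊k/2⌋}` and sum the
full geometric series.
-/

open Finset

section

variable {𝕜 : Type*}

theorem le_pow_mul_add_sum_of_le_mul_add [CommSemiring 𝕜] [PartialOrder 𝕜] [IsOrderedRing 𝕜]
    {δ : 𝕜} (hδ : 0 ≤ δ) {y b : ℕ → 𝕜} {K : ℕ}
    (hrec : ∀ n, K ≤ n → y (n + 1) ≤ δ * y n + b n) {n : ℕ} (hn : K ≤ n) :
    y (n + 1) ≤ δ ^ (n + 1 - K) * y K + ∑ u ∈ Icc K n, δ ^ (n - u) * b u := by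
  induction n, hn using Nat.le_induction with
  | base => simpa using hrec K le_rfl
  | succ n hn ih =>
    have hsum : ∑ u ∈ Icc K (n + 1), δ ^ (n + 1 - u) * b u
        = δ * ∑ u ∈ Icc K n, δ ^ (n - u) * b u + b (n + 1) := by
      rw [sum_Icc_succ_top (by omega), mul_sum, Nat.sub_self, pow_zero, one_mul]
      congr 1
      refine sum_congr rfl fun u hu => ?_
      rw [Nat.sub_add_comm (mem_Icc.mp hu).2, pow_succ']
      ring
    calc y (n + 1 + 1) ≤ δ * y (n + 1) + b (n + 1) := hrec (n + 1) (by omega)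
      _ ≤ δ * (δ ^ (n + 1 - K) * y K + ∑ u ∈ Icc K n, δ ^ (n - u) * b u) + b (n + 1) := by
        gcongr
      _ = δ ^ (n + 1 + 1 - K) * y K + ∑ u ∈ Icc K (n + 1), δ ^ (n + 1 - u) * b u := by
        rw [hsum, Nat.sub_add_comm (by omega : K ≤ n + 1), pow_succ']
        ring

variable [Field 𝕜] [LinearOrder 𝕜] [IsStrictOrderedRing 𝕜] {δ : 𝕜}

theorem sum_Ico_pow_sub_le (hδ0 : 0 ≤ δ) (hδ1 : δ < 1) (m : ℕ) {t k : ℕ} (ht : t ≤ k + 1) :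
    ∑ u ∈ Ico m t, δ ^ (k - u) ≤ δ ^ (k + 1 - t) / (1 - δ) := by
  rw [sum_Ico_reflect (δ ^ ·) m ht]
  exact geom_sum_Ico_le_of_lt_one hδ0 hδ1

theorem sum_range_pow_sub_mul_le_of_antitone (hδ0 : 0 ≤ δ) (hδ1 : δ < 1) {a : ℕ → 𝕜}
    (ha : Antitone a) (ha0 : ∀ u, 0 ≤ a u) {t k : ℕ} (ht : t ≤ k + 1) :
    ∑ u ∈ range (k + 1), δ ^ (k - u) * a u
      ≤ a 0 * (δ ^ (k + 1 - t) / (1 - δ)) + a t * (1 / (1 - δ)) := by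
  rw [← sum_range_add_sum_Ico _ ht]
  gcongr ?_ + ?_
  · calc ∑ u ∈ range t, δ ^ (k - u) * a u ≤ ∑ u ∈ range t, δ ^ (k - u) * a 0 := by
          gcongr with u; exact ha (Nat.zero_le u)
      _ ≤ a 0 * (δ ^ (k + 1 - t) / (1 - δ)) := by
          rw [← sum_mul, mul_comm, ← Nat.Ico_zero_eq_range]
          gcongr
          · exact ha0 0
          · exact sum_Ico_pow_sub_le hδ0 hδ1 0 ht
  · calc ∑ u ∈ Ico t (k + 1), δ ^ (k - u) * a u ≤ ∑ u ∈ Ico t (k + 1), δ ^ (k - u) * a t := by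
          gcongr with u hu; exact ha (mem_Ico.mp hu).1
      _ ≤ a t * (1 / (1 - δ)) := by
          rw [← sum_mul, mul_comm]
          gcongr
          · exact ha0 t
          · simpa using sum_Ico_pow_sub_le hδ0 hδ1 t le_rfl

end

theorem pow_sub_div_two_le_rpow {δ : ℝ} (hδ0 : 0 < δ) (hδ1 : δ ≤ 1) (k : ℕ) :
    δ ^ (k + 1 - k / 2) ≤ δ ^ (((k : ℝ) + 1) / 2) := by
  rw [← Real.rpow_natCast]
  refine Real.rpow_le_rpow_of_exponent_ge hδ0 hδ1 ?_
  have : (2 * (k / 2 : ℕ) : ℝ) ≤ k := by exact_mod_cast Nat.mul_div_le k 2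
  rw [Nat.cast_sub (by omega)]
  push_cast
  linarith

theorem stmt_4_general (δ α₀ R : ℝ) (hδ0 : 0 < δ) (hδ1 : δ < 1) (hα₀ : 0 < α₀) (hR : 0 ≤ R)
    (K : ℕ) (y : ℕ → ℝ)
    (hrec : ∀ k, K ≤ k → y (k + 1) ≤ δ * y k + R * (α₀ / (k + 1)))
    (k : ℕ) (hk : K ≤ k) :
    y (k + 1) ≤ δ ^ (k + 1 - K) * y K + R * α₀ / (1 - δ) * δ ^ (((k : ℝ) + 1) / 2)
      + R / (1 - δ) * (α₀ / ((k / 2 : ℕ) + 1 : ℝ)) := by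
  set a : ℕ → ℝ := fun u => R * (α₀ / (u + 1)) with ha
  have ha0 : ∀ u, 0 ≤ a u := fun u => by positivity
  have ha_anti : Antitone a := fun m n hmn => by simp only [ha]; gcongr
  calc y (k + 1) ≤ δ ^ (k + 1 - K) * y K + ∑ u ∈ Icc K k, δ ^ (k - u) * a u :=
        le_pow_mul_add_sum_of_le_mul_add hδ0.le hrec hk
    _ ≤ δ ^ (k + 1 - K) * y K + ∑ u ∈ range (k + 1), δ ^ (k - u) * a u := by
        gcongr δ ^ (k + 1 - K) * y K + ?_
        refine sum_le_sum_of_subset_of_nonneg ?_ ?_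
        · exact fun u hu => mem_range.mpr (Nat.lt_succ_of_le (mem_Icc.mp hu).2)
        · exact fun u _ _ => mul_nonneg (pow_nonneg hδ0.le _) (ha0 u)
    _ ≤ δ ^ (k + 1 - K) * y K
          + (a 0 * (δ ^ (k + 1 - k / 2) / (1 - δ)) + a (k / 2) * (1 / (1 - δ))) := by
        gcongr
        exact sum_range_pow_sub_mul_le_of_antitone hδ0.le hδ1 ha_anti ha0 (by omega)
    _ = δ ^ (k + 1 - K) * y K + R * α₀ / (1 - δ) * δ ^ (k + 1 - k / 2)
          + R / (1 - δ) * (α₀ / ((k / 2 : ℕ) + 1 : ℝ)) := by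
        simp only [ha, Nat.cast_zero, zero_add, div_one]
        ring
    _ ≤ _ := by gcongr; exact pow_sub_div_two_le_rpow hδ0 hδ1.le k

theorem stmt_4 (δ α₀ R : ℝ) (hδ0 : 0 < δ) (hδ1 : δ < 1) (hα₀ : 0 < α₀) (hR : 0 ≤ R)
    (K : ℕ) (y : ℕ → ℝ) (hy : ∀ k, 0 ≤ y k)
    (hrec : ∀ k, K ≤ k → y (k + 1) ≤ δ * y k + R * (α₀ / (k + 1)))
    (k : ℕ) (hk : K ≤ k) :
    y (k + 1) ≤ δ ^ (k + 1 - K) * y K + R * α₀ / (1 - δ) * δ ^ (((k : ℝ) + 1) / 2)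
      + R / (1 - δ) * (α₀ / ((k / 2 : ℕ) + 1 : ℝ)) :=
  stmt_4_general δ α₀ R hδ0 hδ1 hα₀ hR K y hrec k hk
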